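/- arXiv:1911.04025 — 3 statements merged into one kernel-verified Lean document; each statement's English description precedes it below -/
import Mathlib

section
/- Let n ≥ 4 be an integer and let f assign to each triple (l, j, r) with 1 ≤ l < j < r ≤ n a complex number f(l, j, r), and assume f(l, j, r) depends only on the differences j − l and r − j. For a triangulation T (of P_n or of a sub-polygon) set S(T) = ∑ f(a, b, c) over all triangles {a, b, c} of T with a < b < c. For 1 ≤ l ≤ n − 1 let e_l = (1/C_{n−l−1}) · ∑_T S(T), the sum over all triangulations T of the sub-polygon on {l, …, n} (with e_{n−1} = 0, the sub-polygon on {n−1, n} having exactly one, empty, triangulation). Define β_j = ∑_{s=j+1}^{n−1} f(j, s, n) · C_{s−j−1} · C_{n−s−1} and λ_s = ∑_{j=s+1}^{n−1} C_{j−s−1} · C_{n−j−1} · ( f(s, j, n)² + 2·f(s, j, n)·(e_{s+n−j} + e_j) + 2·e_{s+n−j}·e_j ). Then E(S²) − (E(S))² = (1/C_{n−2}) · ∑_{j=1}^{n−2} λ_j · binom(2j−2, j−1) − ( (1/C_{n−2}) · ∑_{j=1}^{n−2} β_j · binom(2j−2, j−1) )², where E(X) = (1/C_{n−2}) ∑_T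 X(T) with T ranging over all triangulations of P_n. -/
open Finset
open scoped Classical

/-- `IsDiag l r i j` : the pair `{i, j}` (written with `i < j`) is a diagonal of the
convex sub-polygon on vertices `{l, …, r}`. -/
def IsDiag (l r i j : ℕ) : Prop :=
  l ≤ i ∧ i + 2 ≤ j ∧ j ≤ r ∧ ¬(i = l ∧ j = r)

/-- Two diagonals `{a, b}` and `{c, d}` (written with `a < b`, `c < d`) cross. -/
def Crosses (a b c d : ℕ) : Prop :=
  (a < c ∧ c < b ∧ b < d) ∨ (c < a ∧ a < d ∧ d < b)

/-- All diagonals of the sub-polygon on `{l, …, r}`, as ordered pairs. -/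
noncomputable def allDiags (l r : ℕ) : Finset (ℕ × ℕ) :=
  (range (r + 1) ×ˢ range (r + 1)).filter fun p => IsDiag l r p.1 p.2

/-- The triangulations of the sub-polygon on `{l, …, r}` : sets of `r - l - 2`
pairwise noncrossing diagonals. -/
noncomputable def triangulations (l r : ℕ) : Finset (Finset (ℕ × ℕ)) :=
  (allDiags l r).powerset.filter fun T =>
    T.card = r - l - 2 ∧ ∀ d ∈ T, ∀ e ∈ T, ¬ Crosses d.1 d.2 e.1 e.2

/-- `IsEdge l r i j` : the pair `{i, j}` (with `i < j`) is an edge (boundary side) of the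
sub-polygon on `{l, …, r}`. -/
def IsEdge (l r i j : ℕ) : Prop :=
  (l ≤ i ∧ j = i + 1 ∧ j ≤ r) ∨ (i = l ∧ j = r)

/-- `{i, j}` is a side available in the triangulation `T` (an edge of the polygon or a
diagonal of `T`). -/
def IsSide (l r : ℕ) (T : Finset (ℕ × ℕ)) (i j : ℕ) : Prop :=
  IsEdge l r i j ∨ (i, j) ∈ T

/-- The triangles of a triangulation `T` of the sub-polygon on `{l, …, r}`, as ordered
triples `(a, b, c)` with `a < b < c`, each of whose three sides is an edge or a diagonal
of `T`. -/
noncomputable def triangles (l r : ℕ) (T : Finset (ℕ × ℕ)) : Finset (ℕ × ℕ × ℕ) :=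
  (range (r + 1) ×ˢ range (r + 1) ×ˢ range (r + 1)).filter fun t =>
    t.1 < t.2.1 ∧ t.2.1 < t.2.2 ∧
      IsSide l r T t.1 t.2.1 ∧ IsSide l r T t.2.1 t.2.2 ∧ IsSide l r T t.1 t.2.2

/-- The number of sides of the triangle `{a, b, c}` (with `a < b < c`) that are edges of
the sub-polygon on `{l, …, r}`. -/
noncomputable def edgeCount (l r a b c : ℕ) : ℕ :=
  (if IsEdge l r a b then 1 else 0) + (if IsEdge l r b c then 1 else 0) +
    (if IsEdge l r a c then 1 else 0)

/-- `O(T)` : the number of triangles of `T` with exactly one side an edge of `P_n`. -/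
noncomputable def oneSideCount (n : ℕ) (T : Finset (ℕ × ℕ)) : ℕ :=
  ((triangles 1 n T).filter fun t => edgeCount 1 n t.1 t.2.1 t.2.2 = 1).card

/-- `Ear(T)` : the number of triangles of `T` with at least two sides edges of `P_n`. -/
noncomputable def earCount (n : ℕ) (T : Finset (ℕ × ℕ)) : ℕ :=
  ((triangles 1 n T).filter fun t => 2 ≤ edgeCount 1 n t.1 t.2.1 t.2.2).card

/-- `D(T)` : the number of triangles of `T` containing vertex `1`. -/
noncomputable def degOne (n : ℕ) (T : Finset (ℕ × ℕ)) : ℕ :=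
  ((triangles 1 n T).filter fun t => t.1 = 1 ∨ t.2.1 = 1 ∨ t.2.2 = 1).card

/-- `B(T)` : the number of triangles `{l, j, r}` of `T` (with `l < j < r`) such that
`j - l = 1`. -/
noncomputable def blueCount (n : ℕ) (T : Finset (ℕ × ℕ)) : ℕ :=
  ((triangles 1 n T).filter fun t => t.2.1 - t.1 = 1).card

/-- `A_i(T)` : the number of triangles `{1, a, b}` of `T` containing vertex `1`
(written with `1 < a < b`) such that `b - a = i`. -/
noncomputable def angleCount (n : ℕ) (T : Finset (ℕ × ℕ)) (i : ℕ) : ℕ :=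
  ((triangles 1 n T).filter fun t => t.1 = 1 ∧ t.2.2 - t.2.1 = i).card

/-!
Every triangulation of `{s, …, n}` is obtained exactly once by choosing the apex `j` of the
triangle resting on the side `{s, n}` and triangulating `{s, …, j}` and `{j, …, n}`
independently, and `S` is additive along this decomposition. Because `f` only depends on
differences, sums over the triangulations of `{s, …, j}` equal those over its translate
`{s + n - j, …, n}`. So both `W₁ s = ∑_T S(T)` and `W₂ s = ∑_T S(T)²` (over triangulations of
`{s, …, n}`) satisfy `W s = c s + 2 ∑_j C_{j-s-1} W j`, with `c = β` resp. `c = λ`, and the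
convolution identity `binom(2m+2, m+1) = 2 ∑_{i+k=m} C_i binom(2k, k)` solves this recursion as
`W s = ∑_t c t binom(2(t-s), t-s)`.
-/

lemma mem_allDiags {l r : ℕ} {p : ℕ × ℕ} : p ∈ allDiags l r ↔ IsDiag l r p.1 p.2 := by
  unfold allDiags
  simp only [mem_filter, mem_product, mem_range, and_iff_right_iff_imp]
  intro h
  unfold IsDiag at h
  omega

def Noncrossing (T : Finset (ℕ × ℕ)) : Prop :=
  ∀ d ∈ T, ∀ e ∈ T, ¬ Crosses d.1 d.2 e.1 e.2

lemma Noncrossing.mono {T T' : Finset (ℕ × ℕ)} (hT : Noncrossing T) (h : T' ⊆ T) :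
    Noncrossing T' :=
  fun d hd e he => hT d (h hd) e (h he)

lemma mem_triangulations {l r : ℕ} {T : Finset (ℕ × ℕ)} :
    T ∈ triangulations l r ↔ T ⊆ allDiags l r ∧ T.card = r - l - 2 ∧ Noncrossing T := by
  simp [triangulations, Noncrossing]

lemma IsDiag.bounds {l r a b : ℕ} (h : IsDiag l r a b) : l ≤ a ∧ a + 2 ≤ b ∧ b ≤ r :=
  ⟨h.1, h.2.1, h.2.2.1⟩

lemma allDiags_eq_empty {l r : ℕ} (h : r ≤ l + 2) : allDiags l r = ∅ := by
  ext p
  simp only [mem_allDiags, IsDiag, notMem_empty, iff_false]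
  omega

lemma triangulations_eq_singleton_empty {l r : ℕ} (h : r ≤ l + 2) :
    triangulations l r = {∅} := by
  ext T
  simp only [mem_triangulations, allDiags_eq_empty h, subset_empty, mem_singleton]
  constructor
  · exact And.left
  · rintro rfl
    exact ⟨rfl, by rw [card_empty]; omega, by simp [Noncrossing]⟩

/-- The triangulation of `{l, …, r}` whose triangle on the side `{l, r}` has apex `j`, built
from triangulations `T₁` of `{l, …, j}` and `T₂` of `{j, …, r}`. -/
noncomputable def glue (l r j : ℕ) (T₁ T₂ : Finset (ℕ × ℕ)) : Finset (ℕ × ℕ) :=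
  T₁ ∪ T₂ ∪ ({(l, j), (j, r)} ∩ allDiags l r)

section Glue

variable {l r j : ℕ} {T₁ T₂ : Finset (ℕ × ℕ)}

lemma mem_glue {p : ℕ × ℕ} :
    p ∈ glue l r j T₁ T₂ ↔
      p ∈ T₁ ∨ p ∈ T₂ ∨ ((p = (l, j) ∨ p = (j, r)) ∧ IsDiag l r p.1 p.2) := by
  simp only [glue, mem_union, mem_inter, mem_insert, mem_singleton, mem_allDiags, or_assoc]

lemma glue_subset_allDiags (h₁ : T₁ ⊆ allDiags l j) (h₂ : T₂ ⊆ allDiags j r)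
    (hlj : l < j) (hjr : j < r) : glue l r j T₁ T₂ ⊆ allDiags l r := by
  rintro ⟨a, b⟩ hp
  rw [mem_glue] at hp
  rw [mem_allDiags]
  rcases hp with hp | hp | ⟨-, hp⟩
  · have := mem_allDiags.mp (h₁ hp); simp only [IsDiag] at *; omega
  · have := mem_allDiags.mp (h₂ hp); simp only [IsDiag] at *; omega
  · exact hp

lemma glue_cases (h₁ : T₁ ⊆ allDiags l j) (h₂ : T₂ ⊆ allDiags j r) {a b : ℕ}
    (hp : (a, b) ∈ glue l r j T₁ T₂) :
    ((a, b) ∈ T₁ ∧ l ≤ a ∧ b ≤ j) ∨ ((a, b) ∈ T₂ ∧ j ≤ a ∧ b ≤ r) ∨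
      (a = l ∧ b = j) ∨ (a = j ∧ b = r) := by
  rcases mem_glue.mp hp with hp | hp | ⟨hp | hp, -⟩
  · have := (mem_allDiags.mp (h₁ hp)).bounds; exact Or.inl ⟨hp, by omega⟩
  · have := (mem_allDiags.mp (h₂ hp)).bounds; exact Or.inr (Or.inl ⟨hp, by omega⟩)
  · simp only [Prod.mk.injEq] at hp; tauto
  · simp only [Prod.mk.injEq] at hp; tauto

lemma noncrossing_glue (h₁ : T₁ ⊆ allDiags l j) (h₂ : T₂ ⊆ allDiags j r)
    (hnc₁ : Noncrossing T₁) (hnc₂ : Noncrossing T₂) : Noncrossing (glue l r j T₁ T₂) := by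
  rintro ⟨a, b⟩ hp ⟨c, d⟩ hq
  rcases glue_cases h₁ h₂ hp with ⟨hp, hab⟩ | ⟨hp, hab⟩ | hab | hab <;>
  rcases glue_cases h₁ h₂ hq with ⟨hq, hcd⟩ | ⟨hq, hcd⟩ | hcd | hcd <;>
  first
    | exact hnc₁ _ hp _ hq
    | exact hnc₂ _ hp _ hq
    | (simp only [Crosses]; omega)

lemma card_glue (h₁ : T₁ ⊆ allDiags l j) (h₂ : T₂ ⊆ allDiags j r) (hlj : l < j) (hjr : j < r) :
    (glue l r j T₁ T₂).card =
      T₁.card + T₂.card + (if l + 2 ≤ j then 1 else 0) + (if j + 2 ≤ r then 1 else 0) := by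
  have hdisj₁₂ : Disjoint T₁ T₂ := by
    refine disjoint_left.mpr fun p hp₁ hp₂ => ?_
    have := (mem_allDiags.mp (h₁ hp₁)).bounds
    have := (mem_allDiags.mp (h₂ hp₂)).bounds
    omega
  have hdisj : Disjoint (T₁ ∪ T₂) ({(l, j), (j, r)} ∩ allDiags l r) := by
    refine disjoint_right.mpr fun p hp hp' => ?_
    simp only [mem_inter, mem_insert, mem_singleton] at hp
    rcases mem_union.mp hp' with hp' | hp' <;>
    rcases hp.1 with rfl | rfl <;>
    first
      | have := mem_allDiags.mp (h₁ hp'); unfold IsDiag at this; omega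
      | have := mem_allDiags.mp (h₂ hp'); unfold IsDiag at this; omega
  have hsides : ({(l, j), (j, r)} ∩ allDiags l r).card =
      (if l + 2 ≤ j then 1 else 0) + (if j + 2 ≤ r then 1 else 0) := by
    have hne : (l, j) ≠ (j, r) := by simp only [ne_eq, Prod.mk.injEq]; omega
    rw [← filter_mem_eq_inter, card_filter, sum_pair hne]
    simp only [mem_allDiags, IsDiag]
    split_ifs <;> omega
  rw [glue, card_union_of_disjoint hdisj, card_union_of_disjoint hdisj₁₂, hsides]
  ring

lemma glue_mem_triangulations (hlj : l < j) (hjr : j < r) (h₁ : T₁ ∈ triangulations l j)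
    (h₂ : T₂ ∈ triangulations j r) : glue l r j T₁ T₂ ∈ triangulations l r := by
  rw [mem_triangulations] at h₁ h₂ ⊢
  refine ⟨glue_subset_allDiags h₁.1 h₂.1 hlj hjr, ?_,
    noncrossing_glue h₁.1 h₂.1 h₁.2.2 h₂.2.2⟩
  rw [card_glue h₁.1 h₂.1 hlj hjr, h₁.2.1, h₂.2.1]
  split_ifs <;> omega

lemma glue_inter_allDiags_left (h₁ : T₁ ⊆ allDiags l j) (h₂ : T₂ ⊆ allDiags j r) :
    glue l r j T₁ T₂ ∩ allDiags l j = T₁ := by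
  ext ⟨a, b⟩
  refine ⟨fun hp => ?_, fun hp => mem_inter.mpr ⟨mem_glue.mpr (Or.inl hp), h₁ hp⟩⟩
  obtain ⟨hp, hd⟩ := mem_inter.mp hp
  have hd := mem_allDiags.mp hd
  unfold IsDiag at hd
  rcases mem_glue.mp hp with hp | hp | ⟨hp, -⟩
  · exact hp
  · have := mem_allDiags.mp (h₂ hp); unfold IsDiag at this; omega
  · simp only [Prod.mk.injEq] at hp; omega

lemma glue_inter_allDiags_right (h₁ : T₁ ⊆ allDiags l j) (h₂ : T₂ ⊆ allDiags j r) :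
    glue l r j T₁ T₂ ∩ allDiags j r = T₂ := by
  ext ⟨a, b⟩
  refine ⟨fun hp => ?_, fun hp => mem_inter.mpr ⟨mem_glue.mpr (Or.inr (Or.inl hp)), h₂ hp⟩⟩
  obtain ⟨hp, hd⟩ := mem_inter.mp hp
  have hd := mem_allDiags.mp hd
  unfold IsDiag at hd
  rcases mem_glue.mp hp with hp | hp | ⟨hp, -⟩
  · have := mem_allDiags.mp (h₁ hp); unfold IsDiag at this; omega
  · exact hp
  · simp only [Prod.mk.injEq] at hp; omega

lemma left_side_mem_glue (hlj : l + 2 ≤ j) (hjr : j < r) : (l, j) ∈ glue l r j T₁ T₂ :=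
  mem_glue.mpr (Or.inr (Or.inr ⟨Or.inl rfl, by unfold IsDiag; omega⟩))

lemma right_side_mem_glue (hlj : l < j) (hjr : j + 2 ≤ r) : (j, r) ∈ glue l r j T₁ T₂ :=
  mem_glue.mpr (Or.inr (Or.inr ⟨Or.inr rfl, by unfold IsDiag; omega⟩))

lemma apex_eq_of_glue_eq {j' : ℕ} {T₁' T₂' : Finset (ℕ × ℕ)} (hj : j ∈ Ioo l r)
    (hj' : j' ∈ Ioo l r)
    (hnc : Noncrossing (glue l r j T₁ T₂))
    (h : glue l r j T₁ T₂ = glue l r j' T₁' T₂') : j = j' := by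
  rw [mem_Ioo] at hj hj'
  rcases lt_trichotomy j j' with hlt | heq | hlt
  · have := hnc _ (h ▸ left_side_mem_glue (by omega) hj'.2) _
      (right_side_mem_glue hj.1 (by omega))
    simp only [Crosses] at this; omega
  · exact heq
  · have := hnc _ (left_side_mem_glue (by omega) hj.2) _
      (h ▸ right_side_mem_glue hj'.1 (by omega))
    simp only [Crosses] at this; omega

end Glue

lemma exists_unstraddled {l r : ℕ} {T : Finset (ℕ × ℕ)} (hT : T ⊆ allDiags l r)
    (hnc : Noncrossing T) (hlr : l + 2 ≤ r) :
    ∃ j, l < j ∧ j < r ∧ ∀ p ∈ T, p.2 ≤ j ∨ j ≤ p.1 := by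
  rcases T.eq_empty_or_nonempty with rfl | hne
  · exact ⟨l + 1, by omega, by omega, by simp⟩
  -- a longest diagonal of `T` leaves one of its endpoints unstraddled
  obtain ⟨⟨a, b⟩, hab, hmax⟩ := T.exists_max_image (fun p => p.2 - p.1) hne
  have hab' := mem_allDiags.mp (hT hab)
  refine ⟨if l < a then a else b, by unfold IsDiag at hab'; split_ifs <;> omega,
    by unfold IsDiag at hab'; split_ifs <;> omega, fun ⟨c, d⟩ hcd => ?_⟩
  have hcd' := mem_allDiags.mp (hT hcd)
  have hlen := hmax _ hcd
  have hcross := hnc _ hab _ hcd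
  simp only [IsDiag, Crosses] at hab' hcd' hlen hcross ⊢
  split_ifs <;> omega

lemma subset_glue_of_unstraddled {l r j : ℕ} {T : Finset (ℕ × ℕ)} (hT : T ⊆ allDiags l r)
    (hj : ∀ p ∈ T, p.2 ≤ j ∨ j ≤ p.1) :
    T ⊆ glue l r j (T ∩ allDiags l j) (T ∩ allDiags j r) := by
  rintro ⟨a, b⟩ hp
  have hab := mem_allDiags.mp (hT hp)
  have := hj _ hp
  simp only [mem_glue, mem_inter, mem_allDiags, hp, true_and, Prod.mk.injEq]
  simp only [IsDiag] at hab this ⊢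
  omega

lemma card_le_of_noncrossing {l r : ℕ} {T : Finset (ℕ × ℕ)} (hT : T ⊆ allDiags l r)
    (hnc : Noncrossing T) : T.card ≤ r - l - 2 := by
  induction hd : r - l using Nat.strong_induction_on generalizing l r T with
  | _ d ih =>
  subst hd
  by_cases hlr : r ≤ l + 2
  · rw [allDiags_eq_empty hlr, subset_empty] at hT
    simp [hT]
  obtain ⟨j, hlj, hjr, hj⟩ := exists_unstraddled hT hnc (by omega)
  have h₁ := ih (j - l) (by omega) inter_subset_right (hnc.mono inter_subset_left) rfl
  have h₂ := ih (r - j) (by omega) inter_subset_right (hnc.mono inter_subset_left) rfl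
  have := card_le_card (subset_glue_of_unstraddled hT hj)
  rw [card_glue inter_subset_right inter_subset_right hlj hjr] at this
  split_ifs at this <;> omega

lemma exists_eq_glue {l r : ℕ} {T : Finset (ℕ × ℕ)} (hT : T ∈ triangulations l r)
    (hlr : l + 2 ≤ r) :
    ∃ j ∈ Ioo l r, ∃ T₁ ∈ triangulations l j, ∃ T₂ ∈ triangulations j r,
      T = glue l r j T₁ T₂ := by
  obtain ⟨hsub, hcard, hnc⟩ := mem_triangulations.mp hT
  obtain ⟨j, hlj, hjr, hj⟩ := exists_unstraddled hsub hnc hlr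
  have hnc' (m m' : ℕ) : Noncrossing (T ∩ allDiags m m') := hnc.mono inter_subset_left
  have hG := glue_subset_allDiags (r := r) (inter_subset_right : T ∩ allDiags l j ⊆ _)
    (inter_subset_right : T ∩ allDiags j r ⊆ _) hlj hjr
  -- `T` is a maximal noncrossing set, so it equals the noncrossing set `glue …` containing it
  have hT_eq := eq_of_subset_of_card_le (subset_glue_of_unstraddled hsub hj)
    (hcard ▸ card_le_of_noncrossing hG (noncrossing_glue inter_subset_right
      inter_subset_right (hnc' l j) (hnc' j r)))
  have h₁ := card_le_of_noncrossing inter_subset_right (hnc' l j)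
  have h₂ := card_le_of_noncrossing inter_subset_right (hnc' j r)
  have hcard' := card_glue (inter_subset_right : T ∩ allDiags l j ⊆ _)
    (inter_subset_right : T ∩ allDiags j r ⊆ _) hlj hjr
  rw [← hT_eq, hcard] at hcard'
  refine ⟨j, mem_Ioo.mpr ⟨hlj, hjr⟩, T ∩ allDiags l j, ?_, T ∩ allDiags j r, ?_, hT_eq⟩ <;>
    refine mem_triangulations.mpr ⟨inter_subset_right, ?_, hnc' _ _⟩ <;>
    split_ifs at hcard' <;> omega

lemma sum_triangulations_eq_sum_glue {M : Type*} [AddCommMonoid M] {l r : ℕ} (hlr : l + 2 ≤ r)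
    (G : Finset (ℕ × ℕ) → M) :
    ∑ T ∈ triangulations l r, G T =
      ∑ j ∈ Ioo l r, ∑ T₁ ∈ triangulations l j, ∑ T₂ ∈ triangulations j r,
        G (glue l r j T₁ T₂) := by
  rw [sum_congr rfl fun j _ => (sum_product' (triangulations l j) (triangulations j r)
    fun T₁ T₂ => G (glue l r j T₁ T₂)).symm, sum_sigma']
  symm
  refine sum_bij (fun x _ => glue l r x.1 x.2.1 x.2.2) ?_ ?_ ?_ fun _ _ => rfl
  · rintro ⟨j, T₁, T₂⟩ hx
    simp only [mem_sigma, mem_product, mem_Ioo] at hx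
    exact glue_mem_triangulations hx.1.1 hx.1.2 hx.2.1 hx.2.2
  · rintro ⟨j, T₁, T₂⟩ hx ⟨j', T₁', T₂'⟩ hx' h
    simp only [mem_sigma, mem_product] at hx hx'
    obtain ⟨hj, h₁, h₂⟩ := hx
    obtain ⟨hj', h₁', h₂'⟩ := hx'
    have hG := mem_triangulations.mp (glue_mem_triangulations (mem_Ioo.mp hj).1
      (mem_Ioo.mp hj).2 h₁ h₂)
    obtain rfl := apex_eq_of_glue_eq hj hj' hG.2.2 h
    have hs₁ := (mem_triangulations.mp h₁).1
    have hs₂ := (mem_triangulations.mp h₂).1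
    have hs₁' := (mem_triangulations.mp h₁').1
    have hs₂' := (mem_triangulations.mp h₂').1
    dsimp only at h
    obtain rfl : T₁ = T₁' := by
      rw [← glue_inter_allDiags_left hs₁ hs₂ (r := r), h, glue_inter_allDiags_left hs₁' hs₂']
    obtain rfl : T₂ = T₂' := by
      rw [← glue_inter_allDiags_right hs₁ hs₂ (l := l), h, glue_inter_allDiags_right hs₁' hs₂']
    rfl
  · intro T hT
    obtain ⟨j, hj, T₁, h₁, T₂, h₂, rfl⟩ := exists_eq_glue hT hlr
    exact ⟨⟨j, T₁, T₂⟩, mem_sigma.mpr ⟨hj, mem_product.mpr ⟨h₁, h₂⟩⟩, rfl⟩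

lemma card_triangulations {l r : ℕ} (hlr : l < r) :
    (triangulations l r).card = catalan (r - l - 1) := by
  induction hd : r - l using Nat.strong_induction_on generalizing l r with
  | _ d ih =>
  subst hd
  by_cases hsmall : r ≤ l + 2
  · rw [triangulations_eq_singleton_empty hsmall, card_singleton]
    obtain h | h : r - l - 1 = 0 ∨ r - l - 1 = 1 := by omega
    · rw [h, catalan_zero]
    · rw [h, catalan_one]
  have hterm : ∀ j ∈ Ioo l r, ∑ _T₁ ∈ triangulations l j, ∑ _T₂ ∈ triangulations j r, 1 =
      catalan (j - l - 1) * catalan (r - j - 1) := by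
    intro j hj
    rw [mem_Ioo] at hj
    simp only [sum_const, smul_eq_mul, mul_one, ih (j - l) (by omega) hj.1 rfl,
      ih (r - j) (by omega) hj.2 rfl]
  rw [card_eq_sum_ones, sum_triangulations_eq_sum_glue (by omega), sum_congr rfl hterm,
    show r - l - 1 = (r - l - 2) + 1 by omega, catalan_succ',
    Nat.sum_antidiagonal_eq_sum_range_succ_mk, ← Finset.Ico_add_one_left_eq_Ioo,
    sum_Ico_eq_sum_range]
  refine sum_congr (by congr 1; omega) fun k hk => ?_
  congr 2 <;> omega

lemma mem_triangles {l r : ℕ} {T : Finset (ℕ × ℕ)} {a b c : ℕ} :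
    (a, b, c) ∈ triangles l r T ↔
      a < b ∧ b < c ∧ c ≤ r ∧ IsSide l r T a b ∧ IsSide l r T b c ∧ IsSide l r T a c := by
  unfold triangles
  simp only [mem_filter, mem_product, mem_range]
  constructor
  · rintro ⟨⟨-, -, hc⟩, h⟩
    exact ⟨h.1, h.2.1, by omega, h.2.2⟩
  · rintro ⟨hab, hbc, hc, h⟩
    exact ⟨⟨by omega, by omega, by omega⟩, hab, hbc, h⟩

lemma IsSide.bounds {l r : ℕ} {T : Finset (ℕ × ℕ)} (hT : T ⊆ allDiags l r) {x y : ℕ}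
    (h : IsSide l r T x y) : l ≤ x ∧ y ≤ r := by
  rcases h with h | h
  · unfold IsEdge at h; omega
  · have := (mem_allDiags.mp (hT h)).bounds; omega

lemma isSide_glue_iff {l r j : ℕ} {T₁ T₂ : Finset (ℕ × ℕ)} (hlj : l < j) (hjr : j < r)
    {x y : ℕ} :
    IsSide l r (glue l r j T₁ T₂) x y ↔
      (x = l ∧ y = r) ∨ IsSide l j T₁ x y ∨ IsSide j r T₂ x y := by
  simp only [IsSide, IsEdge, mem_glue, Prod.mk.injEq, IsDiag]
  grind

lemma triangles_glue {l r j : ℕ} {T₁ T₂ : Finset (ℕ × ℕ)} (h₁ : T₁ ⊆ allDiags l j)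
    (h₂ : T₂ ⊆ allDiags j r) (hlj : l < j) (hjr : j < r) :
    triangles l r (glue l r j T₁ T₂) =
      insert (l, j, r) (triangles l j T₁ ∪ triangles j r T₂) := by
  have hside {x y : ℕ} : IsSide l r (glue l r j T₁ T₂) x y ↔ (x = l ∧ y = r) ∨
      (IsSide l j T₁ x y ∧ l ≤ x ∧ y ≤ j) ∨ (IsSide j r T₂ x y ∧ j ≤ x ∧ y ≤ r) := by
    rw [isSide_glue_iff hlj hjr]
    refine or_congr Iff.rfl (or_congr ?_ ?_) <;>
      exact ⟨fun h => ⟨h, IsSide.bounds ‹_› h⟩, And.left⟩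
  ext ⟨a, b, c⟩
  simp only [mem_insert, mem_union, mem_triangles, hside, Prod.mk.injEq]
  constructor
  · rintro ⟨hab, hbc, hcr, s₁, s₂, s₃⟩
    rcases s₁ with s₁ | ⟨s₁, hs₁⟩ | ⟨s₁, hs₁⟩ <;>
    rcases s₂ with s₂ | ⟨s₂, hs₂⟩ | ⟨s₂, hs₂⟩ <;>
    rcases s₃ with s₃ | ⟨s₃, hs₃⟩ | ⟨s₃, hs₃⟩ <;>
    first
      | (exfalso; omega)
      | exact Or.inl (by omega)
      | exact Or.inr (Or.inl ⟨hab, hbc, by omega, s₁, s₂, s₃⟩)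
      | exact Or.inr (Or.inr ⟨hab, hbc, hcr, s₁, s₂, s₃⟩)
  · have hedge {m m' : ℕ} {T : Finset (ℕ × ℕ)} : IsSide m m' T m m' := Or.inl (Or.inr ⟨rfl, rfl⟩)
    rintro (⟨rfl, rfl, rfl⟩ | ⟨hab, hbc, hcj, s₁, s₂, s₃⟩ | ⟨hab, hbc, hcr, s₁, s₂, s₃⟩)
    · exact ⟨hlj, hjr, le_rfl, .inr (.inl ⟨hedge, le_rfl, le_rfl⟩),
        .inr (.inr ⟨hedge, le_rfl, le_rfl⟩), .inl ⟨rfl, rfl⟩⟩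
    · have := s₁.bounds h₁
      exact ⟨hab, hbc, by omega, .inr (.inl ⟨s₁, by omega⟩), .inr (.inl ⟨s₂, by omega⟩),
        .inr (.inl ⟨s₃, by omega⟩)⟩
    · have := s₁.bounds h₂
      exact ⟨hab, hbc, hcr, .inr (.inr ⟨s₁, by omega⟩), .inr (.inr ⟨s₂, by omega⟩),
        .inr (.inr ⟨s₃, by omega⟩)⟩

/-- The paper's `S(T)`. -/
noncomputable def triangleSum {M : Type*} [AddCommMonoid M] (f : ℕ → ℕ → ℕ → M) (l r : ℕ)
    (T : Finset (ℕ × ℕ)) : M :=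
  ∑ t ∈ triangles l r T, f t.1 t.2.1 t.2.2

lemma triangleSum_glue {M : Type*} [AddCommMonoid M] (f : ℕ → ℕ → ℕ → M) {l r j : ℕ}
    {T₁ T₂ : Finset (ℕ × ℕ)} (h₁ : T₁ ⊆ allDiags l j) (h₂ : T₂ ⊆ allDiags j r)
    (hlj : l < j) (hjr : j < r) :
    triangleSum f l r (glue l r j T₁ T₂) =
      f l j r + (triangleSum f l j T₁ + triangleSum f j r T₂) := by
  have hdisj : Disjoint (triangles l j T₁) (triangles j r T₂) := by
    refine disjoint_left.mpr fun ⟨a, b, c⟩ ht₁ ht₂ => ?_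
    obtain ⟨hab, hbc, hcj, -⟩ := mem_triangles.mp ht₁
    have := (mem_triangles.mp ht₂).2.2.2.1.bounds h₂
    omega
  have hnotMem : (l, j, r) ∉ triangles l j T₁ ∪ triangles j r T₂ := by
    rw [mem_union, mem_triangles, mem_triangles]
    rintro (h | h)
    · omega
    · have := h.2.2.2.1.bounds h₂
      omega
  rw [triangleSum, triangles_glue h₁ h₂ hlj hjr, sum_insert hnotMem, sum_union hdisj]
  rfl

lemma triangles_empty_eq_empty {l r : ℕ} (h : r ≤ l + 1) : triangles l r ∅ = ∅ := by
  refine eq_empty_of_forall_notMem fun ⟨a, b, c⟩ ht => ?_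
  obtain ⟨hab, hbc, hcr, s₁, -⟩ := mem_triangles.mp ht
  have := s₁.bounds (empty_subset _)
  omega

noncomputable def triangulationSum {M N : Type*} [AddCommMonoid M] [AddCommMonoid N]
    (φ : M → N) (f : ℕ → ℕ → ℕ → M) (l r : ℕ) : N :=
  ∑ T ∈ triangulations l r, φ (triangleSum f l r T)

lemma triangulationSum_of_le_succ {M N : Type*} [AddCommMonoid M] [AddCommMonoid N]
    (φ : M → N) (f : ℕ → ℕ → ℕ → M) {l r : ℕ} (h : r ≤ l + 1) :
    triangulationSum φ f l r = φ 0 := by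
  rw [triangulationSum, triangulations_eq_singleton_empty (by omega), sum_singleton, triangleSum,
    triangles_empty_eq_empty h, sum_empty]

def shiftPair (k : ℕ) : ℕ × ℕ ↪ ℕ × ℕ :=
  (addRightEmbedding k).prodMap (addRightEmbedding k)

@[simp]
lemma shiftPair_apply (k : ℕ) (p : ℕ × ℕ) : shiftPair k p = (p.1 + k, p.2 + k) := rfl

def shiftTriple (k : ℕ) : ℕ × ℕ × ℕ ↪ ℕ × ℕ × ℕ :=
  (addRightEmbedding k).prodMap (shiftPair k)

@[simp]
lemma shiftTriple_apply (k : ℕ) (t : ℕ × ℕ × ℕ) :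
    shiftTriple k t = (t.1 + k, t.2.1 + k, t.2.2 + k) := rfl

section Shift

variable {l r k : ℕ}

lemma allDiags_add : allDiags (l + k) (r + k) = (allDiags l r).map (shiftPair k) := by
  ext ⟨a, b⟩
  simp only [mem_allDiags, mem_map, shiftPair_apply, Prod.exists, Prod.mk.injEq, IsDiag]
  constructor
  · intro h
    exact ⟨a - k, b - k, by omega, by omega, by omega⟩
  · rintro ⟨a, b, h, rfl, rfl⟩
    omega

lemma map_shiftPair_mem_triangulations {T : Finset (ℕ × ℕ)} :
    T.map (shiftPair k) ∈ triangulations (l + k) (r + k) ↔ T ∈ triangulations l r := by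
  simp only [mem_triangulations, Noncrossing, allDiags_add, map_subset_map, card_map,
    forall_mem_map, shiftPair_apply, Crosses]
  refine and_congr Iff.rfl (and_congr (by omega) ?_)
  refine forall₂_congr fun d _ => forall₂_congr fun e _ => ?_
  omega

lemma triangulations_add :
    triangulations (l + k) (r + k) =
      (triangulations l r).map (mapEmbedding (shiftPair k)).toEmbedding := by
  ext T'
  simp only [mem_map, RelEmbedding.coe_toEmbedding, mapEmbedding_apply]
  constructor
  · intro hT'
    obtain ⟨T, -, rfl⟩ := subset_map_iff.mp (allDiags_add ▸ (mem_triangulations.mp hT').1)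
    exact ⟨T, map_shiftPair_mem_triangulations.mp hT', rfl⟩
  · rintro ⟨T, hT, rfl⟩
    exact map_shiftPair_mem_triangulations.mpr hT

lemma isSide_map_shiftPair {T : Finset (ℕ × ℕ)} {x y : ℕ} :
    IsSide (l + k) (r + k) (T.map (shiftPair k)) (x + k) (y + k) ↔ IsSide l r T x y := by
  rw [IsSide, IsSide, show (x + k, y + k) = shiftPair k (x, y) from rfl, mem_map']
  refine or_congr ?_ Iff.rfl
  unfold IsEdge
  omega

lemma le_of_isSide_map_shiftPair {T : Finset (ℕ × ℕ)} {x y : ℕ}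
    (h : IsSide (l + k) (r + k) (T.map (shiftPair k)) x y) : k ≤ x := by
  rcases h with h | h
  · unfold IsEdge at h; omega
  · obtain ⟨p, -, hp⟩ := mem_map.mp h
    simp only [shiftPair_apply, Prod.mk.injEq] at hp
    omega

lemma triangles_map_shiftPair (T : Finset (ℕ × ℕ)) :
    triangles (l + k) (r + k) (T.map (shiftPair k)) = (triangles l r T).map (shiftTriple k) := by
  ext ⟨a, b, c⟩
  constructor
  · intro ht
    obtain ⟨hab, hbc, hcr, s₁, s₂, s₃⟩ := mem_triangles.mp ht
    have ha := le_of_isSide_map_shiftPair s₁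
    obtain ⟨a, rfl⟩ : ∃ a', a = a' + k := ⟨a - k, by omega⟩
    obtain ⟨b, rfl⟩ : ∃ b', b = b' + k := ⟨b - k, by omega⟩
    obtain ⟨c, rfl⟩ : ∃ c', c = c' + k := ⟨c - k, by omega⟩
    rw [isSide_map_shiftPair] at s₁ s₂ s₃
    exact mem_map.mpr ⟨(a, b, c), mem_triangles.mpr ⟨by omega, by omega, by omega, s₁, s₂, s₃⟩, rfl⟩
  · intro ht
    obtain ⟨⟨x, y, z⟩, hxyz, h⟩ := mem_map.mp ht
    simp only [shiftTriple_apply, Prod.mk.injEq] at h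
    obtain ⟨rfl, rfl, rfl⟩ := h
    obtain ⟨hxy, hyz, hzr, s₁, s₂, s₃⟩ := mem_triangles.mp hxyz
    exact mem_triangles.mpr ⟨by omega, by omega, by omega, isSide_map_shiftPair.mpr s₁,
      isSide_map_shiftPair.mpr s₂, isSide_map_shiftPair.mpr s₃⟩

lemma triangulationSum_add {M N : Type*} [AddCommMonoid M] [AddCommMonoid N]
    (φ : M → N) (f : ℕ → ℕ → ℕ → M)
    (hf : ∀ a b c, l ≤ a → a < b → b < c → c ≤ r → f (a + k) (b + k) (c + k) = f a b c) :
    triangulationSum φ f (l + k) (r + k) = triangulationSum φ f l r := by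
  rw [triangulationSum, triangulationSum, triangulations_add, sum_map]
  refine sum_congr rfl fun T hT => congrArg φ ?_
  rw [RelEmbedding.coe_toEmbedding, mapEmbedding_apply, triangleSum, triangles_map_shiftPair,
    sum_map, triangleSum]
  refine sum_congr rfl fun ⟨a, b, c⟩ ht => ?_
  obtain ⟨hab, hbc, hcr, s₁, -⟩ := mem_triangles.mp ht
  exact hf a b c (s₁.bounds (mem_triangulations.mp hT).1).1 hab hbc hcr

end Shift

lemma catalan_pos (m : ℕ) : 0 < catalan m :=
  Nat.pos_of_mul_pos_left ((succ_mul_catalan_eq_centralBinom m).symm ▸ m.centralBinom_pos)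

theorem centralBinom_succ_eq_two_mul_sum_catalan_mul (m : ℕ) :
    (m + 1).centralBinom = 2 * ∑ p ∈ antidiagonal m, catalan p.1 * p.2.centralBinom := by
  have hswap : ∑ p ∈ antidiagonal m, (p.1 + 1) * (catalan p.1 * catalan p.2) =
      ∑ p ∈ antidiagonal m, (p.2 + 1) * (catalan p.1 * catalan p.2) := by
    rw [← Nat.sum_antidiagonal_swap]
    exact sum_congr rfl fun p _ => by simp only [Prod.fst_swap, Prod.snd_swap]; ring
  calc (m + 1).centralBinom = (m + 2) * catalan (m + 1) :=
        (succ_mul_catalan_eq_centralBinom _).symm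
    _ = ∑ p ∈ antidiagonal m, (p.2 + 1) * (catalan p.1 * catalan p.2) +
          ∑ p ∈ antidiagonal m, (p.1 + 1) * (catalan p.1 * catalan p.2) := by
        rw [catalan_succ', mul_sum, ← sum_add_distrib]
        refine sum_congr rfl fun p hp => ?_
        rw [← HasAntidiagonal.mem_antidiagonal.mp hp]
        ring
    _ = 2 * ∑ p ∈ antidiagonal m, catalan p.1 * p.2.centralBinom := by
        rw [hswap, ← two_mul]
        simp only [← succ_mul_catalan_eq_centralBinom, mul_left_comm]

lemma two_mul_sum_Icc_catalan_mul_centralBinom {s t : ℕ} (h : s < t) :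
    2 * ∑ j ∈ Icc (s + 1) t, catalan (j - s - 1) * (t - j).centralBinom =
      (t - s).centralBinom := by
  obtain ⟨m, rfl⟩ : ∃ m, t = s + 1 + m := ⟨t - s - 1, by omega⟩
  rw [show s + 1 + m - s = m + 1 by omega, centralBinom_succ_eq_two_mul_sum_catalan_mul,
    Nat.sum_antidiagonal_eq_sum_range_succ_mk, ← Finset.Ico_add_one_right_eq_Icc,
    sum_Ico_eq_sum_range]
  refine congrArg _ (sum_congr (by congr 1; omega) fun i _ => ?_)
  congr 2 <;> omega

lemma sum_Icc_catalan_mul_reflect {R : Type*} [CommSemiring R] (W : ℕ → R) (s n : ℕ) :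
    ∑ j ∈ Icc (s + 1) (n - 1), (catalan (n - j - 1) : R) * W (s + n - j) =
      ∑ j ∈ Icc (s + 1) (n - 1), (catalan (j - s - 1) : R) * W j := by
  refine sum_nbij' (s + n - ·) (s + n - ·) ?_ ?_ ?_ ?_ ?_ <;> intro j hj <;>
    simp only [mem_Icc] at hj
  · simp only [mem_Icc]; omega
  · simp only [mem_Icc]; omega
  · omega
  · omega
  · congr 3
    omega

theorem eq_sum_centralBinom_of_rec {R : Type*} [CommSemiring R] {m n : ℕ} {W c : ℕ → R}
    (hrec : ∀ s, m ≤ s → s + 2 ≤ n → W s = c s + ∑ j ∈ Icc (s + 1) (n - 1),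
      ((catalan (n - j - 1) : R) * W (s + n - j) + (catalan (j - s - 1) : R) * W j))
    (hbase : ∀ s, n ≤ s + 1 → W s = 0) {s : ℕ} (hs : m ≤ s) :
    W s = ∑ t ∈ Ico s (n - 1), c t * ((t - s).centralBinom : R) := by
  induction hd : n - s using Nat.strong_induction_on generalizing s with
  | _ d ih =>
  subst hd
  by_cases hsn : n ≤ s + 1
  · rw [hbase s hsn, Ico_eq_empty (by omega), sum_empty]
  have hW : ∀ j ∈ Icc (s + 1) (n - 1),
      W j = ∑ t ∈ Ico j (n - 1), c t * ((t - j).centralBinom : R) := fun j hj => by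
    rw [mem_Icc] at hj
    exact ih (n - j) (by omega) (by omega) rfl
  have hconv : ∀ t ∈ Ico (s + 1) (n - 1),
      2 * ∑ j ∈ Icc (s + 1) t, (catalan (j - s - 1) : R) * c t * ((t - j).centralBinom : R) =
        c t * ((t - s).centralBinom : R) := fun t ht => by
    rw [mem_Ico] at ht
    rw [← two_mul_sum_Icc_catalan_mul_centralBinom (show s < t by omega)]
    push_cast
    rw [mul_sum, mul_sum, mul_sum]
    exact sum_congr rfl fun j _ => by ring
  calc W s = c s + 2 * ∑ j ∈ Icc (s + 1) (n - 1), (catalan (j - s - 1) : R) * W j := by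
        rw [hrec s hs (by omega), sum_add_distrib, sum_Icc_catalan_mul_reflect, two_mul]
    _ = c s + 2 * ∑ t ∈ Ico (s + 1) (n - 1), ∑ j ∈ Icc (s + 1) t,
          (catalan (j - s - 1) : R) * c t * ((t - j).centralBinom : R) := by
        rw [sum_congr rfl fun j hj => by rw [hW j hj, mul_sum]]
        rw [sum_comm' (t' := Ico (s + 1) (n - 1)) (s' := fun t => Icc (s + 1) t)
          (fun j t => by simp only [mem_Icc, mem_Ico]; omega)]
        simp only [mul_assoc]
    _ = ∑ t ∈ Ico s (n - 1), c t * ((t - s).centralBinom : R) := by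
        rw [mul_sum, sum_congr rfl hconv, sum_eq_sum_Ico_succ_bot (show s < n - 1 by omega),
          Nat.sub_self, Nat.centralBinom_zero, Nat.cast_one, mul_one]

lemma sum_Ico_mul_centralBinom_eq {R : Type*} [CommSemiring R] (c : ℕ → R) (n : ℕ) :
    ∑ t ∈ Ico 1 (n - 1), c t * ((t - 1).centralBinom : R) =
      ∑ j ∈ Icc 1 (n - 2), c j * ((2 * j - 2).choose (j - 1) : R) := by
  refine sum_congr (by ext; simp only [mem_Ico, mem_Icc]; omega) fun j hj => ?_
  rw [Nat.centralBinom_eq_two_mul_choose, show 2 * (j - 1) = 2 * j - 2 by omega]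

section DoubleSum

variable {R α β : Type*} [CommSemiring R] (A : Finset α) (B : Finset β) (K : R) (a : α → R)
  (b : β → R)

lemma sum_sum_add_add :
    ∑ x ∈ A, ∑ y ∈ B, (K + (a x + b y)) =
      A.card * B.card * K + B.card * ∑ x ∈ A, a x + A.card * ∑ y ∈ B, b y := by
  simp only [sum_add_distrib, sum_const, nsmul_eq_mul, ← mul_sum]
  ring

lemma sum_sum_add_add_sq :
    ∑ x ∈ A, ∑ y ∈ B, (K + (a x + b y)) ^ 2 =
      A.card * B.card * K ^ 2 + 2 * K * (B.card * ∑ x ∈ A, a x + A.card * ∑ y ∈ B, b y) +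
        (B.card * ∑ x ∈ A, a x ^ 2 + A.card * ∑ y ∈ B, b y ^ 2 +
          2 * (∑ x ∈ A, a x) * ∑ y ∈ B, b y) := by
  have hexpand : ∀ x y, (K + (a x + b y)) ^ 2 =
      (K ^ 2 + 2 * K * a x + a x ^ 2) + ((2 * K * b y + b y ^ 2) + 2 * a x * b y) :=
    fun x y => by ring
  simp only [hexpand, sum_add_distrib, sum_const, nsmul_eq_mul, ← mul_sum, ← sum_mul]
  ring

end DoubleSum

section TranslationInvariant

variable {R N : Type*} [CommSemiring R] [AddCommMonoid N] {n : ℕ} {f : ℕ → ℕ → ℕ → R}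
  {F : ℕ → ℕ → R}

lemma triangulationSum_translate_to_end
    (hf : ∀ l j r : ℕ, 1 ≤ l → l < j → j < r → r ≤ n → f l j r = F (j - l) (r - j))
    (φ : R → N) {s j : ℕ} (hs : 1 ≤ s) (hjn : j ≤ n) :
    triangulationSum φ f s j = triangulationSum φ f (s + n - j) n := by
  have h := triangulationSum_add (l := s) (r := j) (k := n - j) φ f fun a b c ha hab hbc hcj => by
    rw [hf a b c (by omega) hab hbc (by omega), hf _ _ _ (by omega) (by omega) (by omega)
      (by omega)]
    congr 1 <;> omega
  rwa [show s + (n - j) = s + n - j by omega, show j + (n - j) = n by omega, eq_comm] at h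

lemma triangulationSum_eq_sum_apex
    (hf : ∀ l j r : ℕ, 1 ≤ l → l < j → j < r → r ≤ n → f l j r = F (j - l) (r - j))
    (φ : R → N) {s : ℕ} (hs : 1 ≤ s) (hsn : s + 2 ≤ n) :
    triangulationSum φ f s n =
      ∑ j ∈ Icc (s + 1) (n - 1), ∑ T₁ ∈ triangulations (s + n - j) n,
        ∑ T₂ ∈ triangulations j n,
          φ (f s j n + (triangleSum f (s + n - j) n T₁ + triangleSum f j n T₂)) := by
  rw [triangulationSum, sum_triangulations_eq_sum_glue hsn,
    show Ioo s n = Icc (s + 1) (n - 1) by ext; simp only [mem_Ioo, mem_Icc]; omega]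
  refine sum_congr rfl fun j hj => ?_
  rw [mem_Icc] at hj
  have hglue : ∀ T₁ ∈ triangulations s j, ∀ T₂ ∈ triangulations j n,
      triangleSum f s n (glue s n j T₁ T₂) =
        f s j n + (triangleSum f s j T₁ + triangleSum f j n T₂) := fun T₁ h₁ T₂ h₂ =>
    triangleSum_glue f (mem_triangulations.mp h₁).1 (mem_triangulations.mp h₂).1 (by omega)
      (by omega)
  rw [sum_congr rfl fun T₁ h₁ => sum_congr rfl fun T₂ h₂ => by rw [hglue T₁ h₁ T₂ h₂]]
  exact triangulationSum_translate_to_end hf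
    (fun x => ∑ T₂ ∈ triangulations j n, φ (f s j n + (x + triangleSum f j n T₂))) hs (by omega)

lemma triangulationSum_id_recursion
    (hf : ∀ l j r : ℕ, 1 ≤ l → l < j → j < r → r ≤ n → f l j r = F (j - l) (r - j))
    {s : ℕ} (hs : 1 ≤ s) (hsn : s + 2 ≤ n) :
    triangulationSum id f s n =
      ∑ j ∈ Icc (s + 1) (n - 1), f s j n * catalan (j - s - 1) * catalan (n - j - 1) +
        ∑ j ∈ Icc (s + 1) (n - 1),
          (catalan (n - j - 1) * triangulationSum id f (s + n - j) n +
            catalan (j - s - 1) * triangulationSum id f j n) := by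
  rw [triangulationSum_eq_sum_apex hf id hs hsn, ← sum_add_distrib]
  refine sum_congr rfl fun j hj => ?_
  rw [mem_Icc] at hj
  simp only [triangulationSum, id_eq]
  rw [sum_sum_add_add, card_triangulations (by omega), card_triangulations (by omega),
    show n - (s + n - j) - 1 = j - s - 1 by omega]
  ring

lemma triangulationSum_sq_recursion
    (hf : ∀ l j r : ℕ, 1 ≤ l → l < j → j < r → r ≤ n → f l j r = F (j - l) (r - j))
    {s : ℕ} (hs : 1 ≤ s) (hsn : s + 2 ≤ n) :
    triangulationSum (· ^ 2) f s n =
      ∑ j ∈ Icc (s + 1) (n - 1),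
          (catalan (j - s - 1) * catalan (n - j - 1) * f s j n ^ 2 +
            2 * f s j n * (catalan (n - j - 1) * triangulationSum id f (s + n - j) n +
              catalan (j - s - 1) * triangulationSum id f j n) +
            2 * triangulationSum id f (s + n - j) n * triangulationSum id f j n) +
        ∑ j ∈ Icc (s + 1) (n - 1),
          ((catalan (n - j - 1) : R) * triangulationSum (· ^ 2) f (s + n - j) n +
            (catalan (j - s - 1) : R) * triangulationSum (· ^ 2) f j n) := by
  rw [triangulationSum_eq_sum_apex hf (· ^ 2) hs hsn, ← sum_add_distrib]
  refine sum_congr rfl fun j hj => ?_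
  rw [mem_Icc] at hj
  simp only [triangulationSum, id_eq]
  rw [sum_sum_add_add_sq, card_triangulations (by omega), card_triangulations (by omega),
    show n - (s + n - j) - 1 = j - s - 1 by omega]
  ring

end TranslationInvariant

theorem variance_formula_general (n : ℕ) (f : ℕ → ℕ → ℕ → ℂ) (F : ℕ → ℕ → ℂ)
    (hf : ∀ l j r : ℕ, 1 ≤ l → l < j → j < r → r ≤ n → f l j r = F (j - l) (r - j))
    (e β lam : ℕ → ℂ)
    (he : ∀ l : ℕ, 1 ≤ l → l ≤ n - 1 →
      e l = (∑ T ∈ triangulations l n, ∑ t ∈ triangles l n T, f t.1 t.2.1 t.2.2) /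
        (catalan (n - l - 1) : ℂ))
    (hβ : ∀ j : ℕ, β j = ∑ s ∈ Icc (j + 1) (n - 1),
      f j s n * (catalan (s - j - 1) : ℂ) * (catalan (n - s - 1) : ℂ))
    (hlam : ∀ s : ℕ, lam s = ∑ j ∈ Icc (s + 1) (n - 1),
      (catalan (j - s - 1) : ℂ) * (catalan (n - j - 1) : ℂ) *
        ((f s j n) ^ 2 + 2 * f s j n * (e (s + n - j) + e j) + 2 * e (s + n - j) * e j)) :
    (∑ T ∈ triangulations 1 n, (∑ t ∈ triangles 1 n T, f t.1 t.2.1 t.2.2) ^ 2) /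
          (catalan (n - 2) : ℂ) -
        ((∑ T ∈ triangulations 1 n, ∑ t ∈ triangles 1 n T, f t.1 t.2.1 t.2.2) /
          (catalan (n - 2) : ℂ)) ^ 2 =
      (∑ j ∈ Icc 1 (n - 2), lam j * ((2 * j - 2).choose (j - 1) : ℂ)) /
          (catalan (n - 2) : ℂ) -
        ((∑ j ∈ Icc 1 (n - 2), β j * ((2 * j - 2).choose (j - 1) : ℂ)) /
          (catalan (n - 2) : ℂ)) ^ 2 := by
  have hmean : ∀ l, 1 ≤ l → l ≤ n - 1 → triangulationSum id f l n = e l * catalan (n - l - 1) :=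
    fun l h₁ h₂ => by
      rw [he l h₁ h₂, div_mul_cancel₀ _ (Nat.cast_ne_zero.mpr (catalan_pos _).ne')]
      rfl
  have h₁ : triangulationSum id f 1 n =
      ∑ j ∈ Icc 1 (n - 2), β j * ((2 * j - 2).choose (j - 1) : ℂ) := by
    rw [← sum_Ico_mul_centralBinom_eq]
    refine eq_sum_centralBinom_of_rec (W := fun s => triangulationSum id f s n)
      (fun s hs hsn => ?_) (fun s hsn => triangulationSum_of_le_succ id f hsn) le_rfl
    rw [triangulationSum_id_recursion hf hs hsn, hβ]
  have h₂ : triangulationSum (· ^ 2) f 1 n =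
      ∑ j ∈ Icc 1 (n - 2), lam j * ((2 * j - 2).choose (j - 1) : ℂ) := by
    rw [← sum_Ico_mul_centralBinom_eq]
    refine eq_sum_centralBinom_of_rec (W := fun s => triangulationSum (· ^ 2) f s n)
      (fun s hs hsn => ?_)
      (fun s hsn => (triangulationSum_of_le_succ _ f hsn).trans (zero_pow two_ne_zero)) le_rfl
    rw [triangulationSum_sq_recursion hf hs hsn, hlam]
    congr 1
    refine sum_congr rfl fun j hj => ?_
    rw [mem_Icc] at hj
    rw [hmean _ (by omega) (by omega), hmean j (by omega) (by omega),
      show n - (s + n - j) - 1 = j - s - 1 by omega]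
    ring
  rw [← h₁, ← h₂]
  rfl

/-- the variance formula of Theorem 1(2). -/
theorem variance_formula (n : ℕ) (hn : 4 ≤ n) (f : ℕ → ℕ → ℕ → ℂ) (F : ℕ → ℕ → ℂ)
    (hf : ∀ l j r : ℕ, 1 ≤ l → l < j → j < r → r ≤ n → f l j r = F (j - l) (r - j))
    (e β lam : ℕ → ℂ)
    (he : ∀ l : ℕ, 1 ≤ l → l ≤ n - 1 →
      e l = (∑ T ∈ triangulations l n, ∑ t ∈ triangles l n T, f t.1 t.2.1 t.2.2) /
        (catalan (n - l - 1) : ℂ))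
    (hβ : ∀ j : ℕ, β j = ∑ s ∈ Icc (j + 1) (n - 1),
      f j s n * (catalan (s - j - 1) : ℂ) * (catalan (n - s - 1) : ℂ))
    (hlam : ∀ s : ℕ, lam s = ∑ j ∈ Icc (s + 1) (n - 1),
      (catalan (j - s - 1) : ℂ) * (catalan (n - j - 1) : ℂ) *
        ((f s j n) ^ 2 + 2 * f s j n * (e (s + n - j) + e j) + 2 * e (s + n - j) * e j)) :
    (∑ T ∈ triangulations 1 n, (∑ t ∈ triangles 1 n T, f t.1 t.2.1 t.2.2) ^ 2) /
          (catalan (n - 2) : ℂ) -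
        ((∑ T ∈ triangulations 1 n, ∑ t ∈ triangles 1 n T, f t.1 t.2.1 t.2.2) /
          (catalan (n - 2) : ℂ)) ^ 2 =
      (∑ j ∈ Icc 1 (n - 2), lam j * ((2 * j - 2).choose (j - 1) : ℂ)) /
          (catalan (n - 2) : ℂ) -
        ((∑ j ∈ Icc 1 (n - 2), β j * ((2 * j - 2).choose (j - 1) : ℂ)) /
          (catalan (n - 2) : ℂ)) ^ 2 :=
  variance_formula_general n f F hf e β lam he hβ hlam
end

section
/- For every integer n ≥ 2, ∑_{j=1}^{n−2} C_{n−1−j} · binom(2j−2, j−1) = (n − 2) · C_{n−2}, where C_m denotes the m-th Catalan number. -/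
/-!
Substituting `j = i + 1` and `binom(2i, i) = (i + 1) C_i`, the sum becomes
`∑_{i < N} (i + 1) C_i C_{N-i}` with `N = n - 2`. Over the full antidiagonal `i + j = N`,
symmetry under `i ↔ j` shows that `2 ∑ (i + 1) C_i C_j = (N + 2) ∑ C_i C_j = (N + 2) C_{N+1}`,
which equals `2 (2N + 1) C_N` by the recurrence of the Catalan numbers. Removing the term
`i = N`, which is `(N + 1) C_N`, leaves `(2N + 1) C_N - (N + 1) C_N = N C_N`.
-/

open Finset

theorem two_mul_sum_antidiagonal_succ_mul_catalan (n : ℕ) :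
    2 * ∑ p ∈ antidiagonal n, (p.1 + 1) * (catalan p.1 * catalan p.2) =
      (n + 2) * catalan (n + 1) := by
  have hswap : ∑ p ∈ antidiagonal n, (p.1 + 1) * (catalan p.1 * catalan p.2) =
      ∑ p ∈ antidiagonal n, (p.2 + 1) * (catalan p.1 * catalan p.2) := by
    rw [← Nat.sum_antidiagonal_swap]
    exact sum_congr rfl fun p _ => by rw [Prod.fst_swap, Prod.snd_swap, mul_comm (catalan p.2)]
  calc 2 * ∑ p ∈ antidiagonal n, (p.1 + 1) * (catalan p.1 * catalan p.2)
      = ∑ p ∈ antidiagonal n, ((p.1 + 1) + (p.2 + 1)) * (catalan p.1 * catalan p.2) := by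
        rw [two_mul]
        nth_rw 2 [hswap]
        rw [← sum_add_distrib]
        exact sum_congr rfl fun p _ => (add_mul _ _ _).symm
    _ = ∑ p ∈ antidiagonal n, (n + 2) * (catalan p.1 * catalan p.2) := by
        refine sum_congr rfl fun p hp => ?_
        rw [← HasAntidiagonal.mem_antidiagonal.mp hp]
        ring
    _ = (n + 2) * catalan (n + 1) := by rw [← mul_sum, catalan_succ']

theorem succ_succ_mul_catalan_succ (n : ℕ) :
    (n + 2) * catalan (n + 1) = 2 * (2 * n + 1) * catalan n := by
  refine Nat.eq_of_mul_eq_mul_left n.succ_pos ?_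
  calc (n + 1) * ((n + 2) * catalan (n + 1))
      = (n + 1) * (n + 1).centralBinom := by rw [← succ_mul_catalan_eq_centralBinom]
    _ = 2 * (2 * n + 1) * n.centralBinom := Nat.succ_mul_centralBinom_succ n
    _ = (n + 1) * (2 * (2 * n + 1) * catalan n) := by
        rw [← succ_mul_catalan_eq_centralBinom]; ring

theorem sum_range_centralBinom_mul_catalan (n : ℕ) :
    ∑ i ∈ range n, i.centralBinom * catalan (n - i) = n * catalan n := by
  have h := two_mul_sum_antidiagonal_succ_mul_catalan n
  rw [succ_succ_mul_catalan_succ, Nat.sum_antidiagonal_eq_sum_range_succ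
    (fun i j => (i + 1) * (catalan i * catalan j)), sum_range_succ, Nat.sub_self,
    catalan_zero] at h
  simp only [← succ_mul_catalan_eq_centralBinom, mul_assoc]
  linarith

theorem catalan_identity_six_general (n : ℕ) :
    ∑ j ∈ Finset.Icc 1 (n - 2), catalan (n - 1 - j) * (2 * j - 2).choose (j - 1) =
      (n - 2) * catalan (n - 2) := by
  rw [← sum_range_centralBinom_mul_catalan, ← Ico_add_one_right_eq_Icc, range_eq_Ico,
    ← sum_Ico_add' _ 0 (n - 2) 1]
  refine sum_congr rfl fun i _ => ?_
  rw [show n - 1 - (i + 1) = n - 2 - i by omega, show 2 * (i + 1) - 2 = 2 * i by omega,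
    Nat.add_sub_cancel, mul_comm, Nat.centralBinom]

/-- a Catalan-number identity. -/
theorem catalan_identity_six (n : ℕ) (hn : 2 ≤ n) :
    ∑ j ∈ Finset.Icc 1 (n - 2), catalan (n - 1 - j) * (2 * j - 2).choose (j - 1) =
      (n - 2) * catalan (n - 2) :=
  catalan_identity_six_general n
end

section
/- For every integer n ≥ 3, ∑_{j=0}^{n−3} C_j · binom(2n−4−2j, n−2−j) = binom(2n−3, n−1) − C_{n−2}, where C_m denotes the m-th Catalan number. -/
open Finset

private lemma cat_mul (m : ℕ) : ((m : ℤ) + 1) * catalan m = ((2 * m).choose m : ℤ) := by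
  have h : (m + 1) * catalan m = (2 * m).choose m := succ_mul_catalan_eq_centralBinom m
  exact_mod_cast h

private lemma lemA (k : ℕ) :
    ((2 * k + 2).choose (k + 1) : ℤ) = 4 * ((2 * k).choose k : ℤ) - 2 * catalan k := by
  have hk : ((k : ℤ) + 1) ≠ 0 := by positivity
  apply mul_left_cancel₀ hk
  have h : (k + 1) * ((2 * k + 2).choose (k + 1)) = 2 * (2 * k + 1) * ((2 * k).choose k) := by
    have := Nat.succ_mul_centralBinom_succ k
    have h1 : (k + 1).centralBinom = (2 * k + 2).choose (k + 1) := by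
      unfold Nat.centralBinom; ring_nf
    rw [h1] at this
    exact this
  have h2 : ((k : ℤ) + 1) * ((2 * k + 2).choose (k + 1) : ℤ)
      = 2 * (2 * (k : ℤ) + 1) * ((2 * k).choose k : ℤ) := by exact_mod_cast h
  have h3 := cat_mul k
  linear_combination h2 + 2 * h3

private lemma lemC (m : ℕ) :
    ((2 * m + 1).choose (m + 1) : ℤ) = 2 * ((2 * m).choose m : ℤ) - catalan m := by
  have hk : ((m : ℤ) + 1) ≠ 0 := by positivity
  apply mul_left_cancel₀ hk
  have h := Nat.add_one_mul_choose_eq (2 * m) m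
  have h2 : (2 * (m : ℤ) + 1) * ((2 * m).choose m : ℤ)
      = ((2 * m + 1).choose (m + 1) : ℤ) * ((m : ℤ) + 1) := by exact_mod_cast h
  have h3 := cat_mul m
  linear_combination h3 - h2

private lemma key (m : ℕ) :
    (∑ j ∈ Finset.range (m + 1), (catalan j : ℤ) * ((2 * (m - j)).choose (m - j) : ℤ)) =
      2 * ((2 * m).choose m : ℤ) - catalan m := by
  induction m with
  | zero => simp
  | succ m ih =>
    rw [Finset.sum_range_succ]
    have hstep : ∀ j ∈ Finset.range (m + 1),
        (catalan j : ℤ) * ((2 * (m + 1 - j)).choose (m + 1 - j) : ℤ) =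
          4 * ((catalan j : ℤ) * ((2 * (m - j)).choose (m - j) : ℤ))
            - 2 * ((catalan j : ℤ) * (catalan (m - j) : ℤ)) := by
      intro j hj
      rw [Finset.mem_range] at hj
      have h2 : 2 * (m + 1 - j) = 2 * (m - j) + 2 := by omega
      have h1 : m + 1 - j = (m - j) + 1 := by omega
      rw [h2, h1, lemA (m - j)]
      ring
    rw [Finset.sum_congr rfl hstep, Finset.sum_sub_distrib, ← Finset.mul_sum, ← Finset.mul_sum, ih]
    have hcat : (catalan (m + 1) : ℤ)
        = ∑ j ∈ Finset.range (m + 1), (catalan j : ℤ) * (catalan (m - j) : ℤ) := by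
      rw [catalan_succ m,
        Fin.sum_univ_eq_sum_range (fun i => catalan i * catalan (m - i)) (m + 1)]
      push_cast
      ring
    rw [← hcat]
    have hA := lemA m
    have h4 : (2 * (m + 1)).choose (m + 1) = (2 * m + 2).choose (m + 1) := by ring_nf
    simp only [Nat.sub_self, Nat.mul_zero, Nat.choose_self, h4]
    push_cast
    linear_combination -2 * hA

/-- a Catalan-number identity. -/
theorem catalan_identity_seven (n : ℕ) (hn : 3 ≤ n) :
    (∑ j ∈ Finset.range (n - 2), catalan j * (2 * n - 4 - 2 * j).choose (n - 2 - j) : ℤ) =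
      ((2 * n - 3).choose (n - 1) : ℤ) - (catalan (n - 2) : ℤ) := by
  obtain ⟨m, rfl⟩ : ∃ m, n = m + 3 := ⟨n - 3, by omega⟩
  have e1 : m + 3 - 2 = m + 1 := by omega
  have e2 : 2 * (m + 3) - 3 = 2 * (m + 1) + 1 := by omega
  have e3 : m + 3 - 1 = (m + 1) + 1 := by omega
  rw [e1, e2, e3]
  have hK := key (m + 1)
  rw [Finset.sum_range_succ] at hK
  have hsum : (∑ j ∈ Finset.range (m + 1),
        (catalan j : ℤ) * ((2 * (m + 3) - 4 - 2 * j).choose (m + 1 - j) : ℤ)) =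
      ∑ j ∈ Finset.range (m + 1), (catalan j : ℤ) * ((2 * (m + 1 - j)).choose (m + 1 - j) : ℤ) := by
    apply Finset.sum_congr rfl
    intro j hj
    rw [Finset.mem_range] at hj
    have a1 : 2 * (m + 3) - 4 - 2 * j = 2 * (m + 1 - j) := by omega
    rw [a1]
  rw [hsum]
  simp only [Nat.sub_self, Nat.mul_zero, Nat.choose_self, Nat.cast_one, mul_one] at hK
  rw [lemC (m + 1)]
  linarith [hK]
end
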